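/- arXiv:2101.05197 — 2 statements merged into one kernel-verified Lean document; each statement's English description precedes it below -/
import Mathlib

section
/- Let η be 𝓐-measurable and τ be 𝓑-measurable random variables with E|η|^{2+δ} ≤ C₁ and E|τ|^{2+δ} ≤ C₂ for some δ > 0, and let α be the alpha-mixing coefficient between 𝓐 and 𝓑. Then for every N > 0, |E[ητ] − E[η]E[τ]| ≤ 4N²α + (2/N^δ)(C₁ + C₂) + (2/N^δ)√(C₁C₂). -/
/-!
Write `η = ξ + η'`, `τ = ζ + τ'` with `ξ, ζ` the truncations at level `N`. The tails vanish unless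
`|η| ≥ N`, so `E|η'| ≤ C₁ / N^(1+δ)` and `E η'² ≤ C₁ / N^δ`, and the covariance splits into four
terms. For the bounded one, replacing `ξ` by the sign of `E[ζ | 𝓐] - E ζ` costs a factor `2N` and
turns `ξ` into (an affine image of) an indicator of an `𝓐`-set; the same step on the `𝓑` side leaves
`|P(A ∩ B) - P(A)P(B)| ≤ α`, whence `4N²α`. The mixed terms are at most `2N E|tail|`, and the
tail-tail term is bounded by Cauchy–Schwarz.
-/

open MeasureTheory ProbabilityTheory

lemma Real.rpow_mul_rpow_le_rpow_add {a N : ℝ} (hN : 0 < N) (hNa : N ≤ a) (p : ℝ) {q : ℝ}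
    (hq : 0 ≤ q) : a ^ p * N ^ q ≤ a ^ (p + q) := by
  rw [Real.rpow_add (hN.trans_le hNa)]
  gcongr
  exact Real.rpow_nonneg (hN.le.trans hNa) p

lemma MeasureTheory.abs_integral_mul_le_sqrt_mul_sqrt {Ω : Type*} {m : MeasurableSpace Ω}
    {μ : Measure Ω} {f g : Ω → ℝ} (hf : MemLp f 2 μ) (hg : MemLp g 2 μ) :
    |∫ ω, f ω * g ω ∂μ| ≤ √(∫ ω, f ω ^ 2 ∂μ) * √(∫ ω, g ω ^ 2 ∂μ) := by
  have hofReal : ENNReal.ofReal 2 = 2 := ENNReal.ofReal_ofNat 2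
  have hnorm_sq : ∀ x : ℝ, ‖x‖ ^ (2 : ℝ) = x ^ 2 := fun x => by
    rw [Real.rpow_two, Real.norm_eq_abs, sq_abs]
  calc |∫ ω, f ω * g ω ∂μ| ≤ ∫ ω, ‖f ω‖ * ‖g ω‖ ∂μ :=
        abs_integral_le_integral_abs.trans_eq (by simp only [Real.norm_eq_abs, abs_mul])
    _ ≤ (∫ ω, ‖f ω‖ ^ (2 : ℝ) ∂μ) ^ (1 / (2 : ℝ)) * (∫ ω, ‖g ω‖ ^ (2 : ℝ) ∂μ) ^ (1 / (2 : ℝ)) :=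
        integral_mul_norm_le_Lp_mul_Lq .two_two (hofReal ▸ hf) (hofReal ▸ hg)
    _ = √(∫ ω, f ω ^ 2 ∂μ) * √(∫ ω, g ω ^ 2 ∂μ) := by
        simp only [hnorm_sq, Real.sqrt_eq_rpow]

namespace ProbabilityTheory

section Covariance

variable {Ω : Type*} {m : MeasurableSpace Ω} {μ : Measure Ω} [IsProbabilityMeasure μ]
  {X Y : Ω → ℝ}

lemma abs_covariance_le_sqrt_mul_sqrt (hX : MemLp X 2 μ) (hY : MemLp Y 2 μ) :
    |cov[X, Y; μ]| ≤ √(∫ ω, X ω ^ 2 ∂μ) * √(∫ ω, Y ω ^ 2 ∂μ) := by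
  have hvar : ∀ {Z : Ω → ℝ}, MemLp Z 2 μ → ∫ ω, (Z ω - μ[Z]) ^ 2 ∂μ ≤ ∫ ω, Z ω ^ 2 ∂μ :=
    fun hZ => (variance_eq_integral hZ.aestronglyMeasurable.aemeasurable).symm.trans_le
      (variance_le_expectation_sq hZ.aestronglyMeasurable)
  calc |cov[X, Y; μ]| ≤ √(∫ ω, (X ω - μ[X]) ^ 2 ∂μ) * √(∫ ω, (Y ω - μ[Y]) ^ 2 ∂μ) :=
        abs_integral_mul_le_sqrt_mul_sqrt (hX.sub (memLp_const _)) (hY.sub (memLp_const _))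
    _ ≤ √(∫ ω, X ω ^ 2 ∂μ) * √(∫ ω, Y ω ^ 2 ∂μ) := by
        gcongr √?_ * √?_
        exacts [hvar hX, hvar hY]

lemma abs_covariance_le_of_abs_le {M : ℝ} (hX : AEStronglyMeasurable X μ)
    (hXM : ∀ ω, |X ω| ≤ M) (hY : MemLp Y 2 μ) :
    |cov[X, Y; μ]| ≤ 2 * M * ∫ ω, |Y ω| ∂μ := by
  have hXY : |∫ ω, X ω * Y ω ∂μ| ≤ M * ∫ ω, |Y ω| ∂μ := by
    rw [← integral_const_mul]
    refine abs_integral_le_integral_abs.trans (integral_mono_of_nonneg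
      (.of_forall fun _ => abs_nonneg _) ((hY.integrable one_le_two).abs.const_mul M)
      (.of_forall fun ω => ?_))
    simp only [abs_mul]
    exact mul_le_mul_of_nonneg_right (hXM ω) (abs_nonneg _)
  have hEX : |μ[X]| ≤ M := by
    simpa using norm_integral_le_of_norm_le_const (μ := μ) (f := X) (.of_forall hXM)
  have hEY : |μ[Y]| ≤ ∫ ω, |Y ω| ∂μ := abs_integral_le_integral_abs
  rw [covariance_eq_sub (.of_bound hX M (.of_forall hXM)) hY]
  calc |μ[X * Y] - μ[X] * μ[Y]| ≤ |μ[X * Y]| + |μ[X]| * |μ[Y]| := by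
        rw [← abs_mul]; exact abs_sub _ _
    _ ≤ M * ∫ ω, |Y ω| ∂μ + M * ∫ ω, |Y ω| ∂μ := by
        gcongr
        · exact hXY
        · exact (abs_nonneg _).trans hEX
    _ = 2 * M * ∫ ω, |Y ω| ∂μ := by ring

lemma covariance_indicator_one {A B : Set Ω} (hA : MeasurableSet A) (hB : MeasurableSet B) :
    cov[A.indicator 1, B.indicator 1; μ] = μ.real (A ∩ B) - μ.real A * μ.real B := by
  have hA2 : MemLp (A.indicator (1 : Ω → ℝ)) 2 μ := (memLp_const 1).indicator hA
  have hB2 : MemLp (B.indicator (1 : Ω → ℝ)) 2 μ := (memLp_const 1).indicator hB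
  rw [covariance_eq_sub hA2 hB2, ← Set.inter_indicator_one, integral_indicator_one (hA.inter hB),
    integral_indicator_one hA, integral_indicator_one hB]

end Covariance

section Truncation

variable {Ω : Type*} {m : MeasurableSpace Ω} {μ : Measure Ω} {f : Ω → ℝ} {N δ : ℝ}

lemma _root_.Measurable.truncation (hf : Measurable f) (N : ℝ) : Measurable (truncation f N) :=
  (measurable_id.indicator measurableSet_Ioc).comp hf

lemma truncation_eq_self_or (f : Ω → ℝ) (N : ℝ) (ω : Ω) :
    truncation f N ω = f ω ∨ truncation f N ω = 0 ∧ N ≤ |f ω| := by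
  simp only [truncation, Function.comp_apply, Set.indicator, Set.mem_Ioc, id]
  split_ifs with h
  · exact .inl rfl
  · refine .inr ⟨rfl, ?_⟩
    rw [le_abs]
    by_contra! hlt
    exact h ⟨by linarith [hlt.2], hlt.1.le⟩

lemma abs_sub_truncation_le (hN : 0 < N) (hδ : 0 ≤ δ) (f : Ω → ℝ) (ω : Ω) :
    |f ω - truncation f N ω| ≤ |f ω| ^ (2 + δ) / N ^ (1 + δ) := by
  rcases truncation_eq_self_or f N ω with h | ⟨h, hNf⟩
  · rw [h, sub_self, abs_zero]; positivity
  · rw [h, sub_zero, le_div_iff₀ (by positivity)]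
    simpa [Real.rpow_one, show 1 + (1 + δ) = 2 + δ by ring] using
      Real.rpow_mul_rpow_le_rpow_add hN hNf 1 (by linarith : 0 ≤ 1 + δ)

lemma sq_sub_truncation_le (hN : 0 < N) (hδ : 0 ≤ δ) (f : Ω → ℝ) (ω : Ω) :
    (f ω - truncation f N ω) ^ 2 ≤ |f ω| ^ (2 + δ) / N ^ δ := by
  rcases truncation_eq_self_or f N ω with h | ⟨h, hNf⟩
  · rw [h, sub_self, zero_pow two_ne_zero]; positivity
  · rw [h, sub_zero, le_div_iff₀ (by positivity), ← sq_abs, ← Real.rpow_two]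
    exact Real.rpow_mul_rpow_le_rpow_add hN hNf 2 hδ

lemma integral_abs_sub_truncation_le (hN : 0 < N) (hδ : 0 ≤ δ)
    (hint : Integrable (fun ω => |f ω| ^ (2 + δ)) μ) :
    ∫ ω, |f ω - truncation f N ω| ∂μ ≤ (∫ ω, |f ω| ^ (2 + δ) ∂μ) / N ^ (1 + δ) := by
  rw [← integral_div]
  exact integral_mono_of_nonneg (.of_forall fun _ => abs_nonneg _) (hint.div_const _)
    (.of_forall (abs_sub_truncation_le hN hδ f))

lemma integral_sq_sub_truncation_le (hN : 0 < N) (hδ : 0 ≤ δ)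
    (hint : Integrable (fun ω => |f ω| ^ (2 + δ)) μ) :
    ∫ ω, (f ω - truncation f N ω) ^ 2 ∂μ ≤ (∫ ω, |f ω| ^ (2 + δ) ∂μ) / N ^ δ := by
  rw [← integral_div]
  exact integral_mono_of_nonneg (.of_forall fun _ => sq_nonneg _) (hint.div_const _)
    (.of_forall (sq_sub_truncation_le hN hδ f))

lemma memLp_two_of_integrable_abs_rpow [IsFiniteMeasure μ] (hδ : 0 ≤ δ)
    (hf : AEStronglyMeasurable f μ) (hint : Integrable (fun ω => |f ω| ^ (2 + δ)) μ) :
    MemLp f 2 μ := by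
  have h2 : Integrable (fun ω => ‖f ω‖ ^ (2 : ℝ)) μ :=
    integrable_norm_rpow_of_le hf (by norm_num) (by linarith) (by linarith) hint
  exact (integrable_norm_rpow_iff hf two_ne_zero ENNReal.ofNat_ne_top).1 (by simpa using h2)

variable [IsProbabilityMeasure μ] {X Y : Ω → ℝ} {C C₁ C₂ : ℝ}

lemma covariance_eq_truncation_add (hX : MemLp X 2 μ) (hY : MemLp Y 2 μ) (N : ℝ) :
    cov[X, Y; μ] = cov[truncation X N, truncation Y N; μ] +
      cov[truncation X N, Y - truncation Y N; μ] + cov[X - truncation X N, truncation Y N; μ] +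
      cov[X - truncation X N, Y - truncation Y N; μ] := by
  have hX₀ : MemLp (truncation X N) 2 μ := hX.1.memLp_truncation
  have hY₀ : MemLp (truncation Y N) 2 μ := hY.1.memLp_truncation
  conv_lhs => rw [← add_sub_cancel (truncation X N) X, ← add_sub_cancel (truncation Y N) Y]
  rw [covariance_add_left hX₀ (hX.sub hX₀) (hY₀.add (hY.sub hY₀)),
    covariance_add_right hX₀ hY₀ (hY.sub hY₀), covariance_add_right (hX.sub hX₀) hY₀ (hY.sub hY₀)]
  ring

lemma abs_covariance_sub_truncation_le (hN : 0 < N) (hδ : 0 ≤ δ)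
    (hX : AEStronglyMeasurable X μ) (hXN : ∀ ω, |X ω| ≤ N) (hY : AEStronglyMeasurable Y μ)
    (hint : Integrable (fun ω => |Y ω| ^ (2 + δ)) μ) (hC : ∫ ω, |Y ω| ^ (2 + δ) ∂μ ≤ C) :
    |cov[X, Y - truncation Y N; μ]| ≤ 2 * C / N ^ δ := by
  have hY2 := memLp_two_of_integrable_abs_rpow hδ hY hint
  calc |cov[X, Y - truncation Y N; μ]| ≤ 2 * N * ∫ ω, |Y ω - truncation Y N ω| ∂μ :=
        abs_covariance_le_of_abs_le hX hXN (hY2.sub hY.memLp_truncation)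
    _ ≤ 2 * N * (C / N ^ (1 + δ)) := by
        gcongr
        exact (integral_abs_sub_truncation_le hN hδ hint).trans (by gcongr)
    _ = 2 * C / N ^ δ := by
        rw [Real.rpow_add hN, Real.rpow_one]
        field_simp

lemma abs_covariance_sub_truncation_sub_truncation_le (hN : 0 < N) (hδ : 0 ≤ δ)
    (hX : AEStronglyMeasurable X μ) (hintX : Integrable (fun ω => |X ω| ^ (2 + δ)) μ)
    (hC₁ : ∫ ω, |X ω| ^ (2 + δ) ∂μ ≤ C₁) (hY : AEStronglyMeasurable Y μ)
    (hintY : Integrable (fun ω => |Y ω| ^ (2 + δ)) μ) (hC₂ : ∫ ω, |Y ω| ^ (2 + δ) ∂μ ≤ C₂) :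
    |cov[X - truncation X N, Y - truncation Y N; μ]| ≤ √(C₁ * C₂) / N ^ δ := by
  have hC₁0 : 0 ≤ C₁ := (integral_nonneg fun _ => by positivity).trans hC₁
  have hC₂0 : 0 ≤ C₂ := (integral_nonneg fun _ => by positivity).trans hC₂
  calc |cov[X - truncation X N, Y - truncation Y N; μ]|
      ≤ √(∫ ω, (X ω - truncation X N ω) ^ 2 ∂μ) * √(∫ ω, (Y ω - truncation Y N ω) ^ 2 ∂μ) :=
        abs_covariance_le_sqrt_mul_sqrt
          ((memLp_two_of_integrable_abs_rpow hδ hX hintX).sub hX.memLp_truncation)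
          ((memLp_two_of_integrable_abs_rpow hδ hY hintY).sub hY.memLp_truncation)
    _ ≤ √(C₁ / N ^ δ) * √(C₂ / N ^ δ) := by
        gcongr √?_ * √?_
        · exact (integral_sq_sub_truncation_le hN hδ hintX).trans (by gcongr)
        · exact (integral_sq_sub_truncation_le hN hδ hintY).trans (by gcongr)
    _ = √(C₁ * C₂) / N ^ δ := by
        rw [Real.sqrt_div hC₁0, Real.sqrt_div hC₂0, Real.sqrt_mul hC₁0, div_mul_div_comm,
          Real.mul_self_sqrt (by positivity)]

end Truncation

section Mixing

variable {Ω : Type*} {mA m : MeasurableSpace Ω} {μ : Measure Ω} [IsProbabilityMeasure μ]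

lemma covariance_eq_integral_mul_condExp_sub (hm : mA ≤ m) {f g : Ω → ℝ} {N : ℝ}
    (hf : StronglyMeasurable[mA] f) (hfN : ∀ ω, |f ω| ≤ N) (hg : Integrable g μ) :
    cov[f, g; μ] = ∫ ω, f ω * (μ[g|mA] ω - μ[g]) ∂μ := by
  have hfN' : ∀ᵐ ω ∂μ, ‖f ω‖ ≤ N := .of_forall hfN
  have hgc : Integrable (fun ω => g ω - μ[g]) μ := hg.sub (integrable_const _)
  have hf_int : Integrable f μ := .of_bound (hf.mono hm).aestronglyMeasurable N hfN'
  have hpull : μ[f * fun ω => g ω - μ[g] | mA] =ᵐ[μ] fun ω => f ω * (μ[g|mA] ω - μ[g]) := by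
    filter_upwards [condExp_stronglyMeasurable_mul_of_bound hm hf hgc N hfN',
      condExp_sub hg (integrable_const (μ[g])) mA] with ω h1 h2
    rw [h1, Pi.mul_apply, show μ[fun ω => g ω - μ[g] | mA] ω = _ from h2, Pi.sub_apply,
      condExp_const hm]
  calc cov[f, g; μ]
      = ∫ ω, f ω * (g ω - μ[g]) ∂μ - μ[f] * ∫ ω, (g ω - μ[g]) ∂μ := by
        simp_rw [covariance, sub_mul]
        rw [integral_sub (hgc.bdd_mul hf_int.1 hfN') (hgc.const_mul _), integral_const_mul]
    _ = ∫ ω, f ω * (μ[g|mA] ω - μ[g]) ∂μ := by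
        rw [integral_sub hg (integrable_const _), integral_const, probReal_univ, one_smul,
          sub_self, mul_zero, sub_zero, ← integral_condExp hm]
        exact integral_congr_ae hpull

lemma exists_abs_covariance_le_indicator (hm : mA ≤ m) {f g : Ω → ℝ} {N : ℝ}
    (hf : StronglyMeasurable[mA] f) (hfN : ∀ ω, |f ω| ≤ N) (hg : Integrable g μ) :
    ∃ A, MeasurableSet[mA] A ∧ |cov[f, g; μ]| ≤ 2 * N * |cov[A.indicator 1, g; μ]| := by
  have : Nonempty Ω := nonempty_of_isProbabilityMeasure μ
  have hN : 0 ≤ N := (abs_nonneg _).trans (hfN (Classical.arbitrary Ω))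
  set h : Ω → ℝ := fun ω => μ[g|mA] ω - μ[g]
  have hh_meas : StronglyMeasurable[mA] h := stronglyMeasurable_condExp.sub stronglyMeasurable_const
  have hh_int : Integrable h μ := integrable_condExp.sub (integrable_const _)
  set A := {ω | 0 ≤ h ω}
  have hA : MeasurableSet[mA] A := measurableSet_le measurable_const hh_meas.measurable
  set s : Ω → ℝ := fun ω => 2 * A.indicator 1 ω - 1
  have hs_meas : StronglyMeasurable[mA] s :=
    ((stronglyMeasurable_const.indicator hA).const_mul 2).sub stronglyMeasurable_const
  have hs_abs : ∀ ω, |s ω| ≤ 1 := fun ω => by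
    by_cases hω : ω ∈ A <;> norm_num [s, hω]
  have hsh : ∀ ω, s ω * h ω = |h ω| := fun ω => by
    by_cases hω : 0 ≤ h ω
    · norm_num [s, A, hω, abs_of_nonneg hω]
    · norm_num [s, A, hω, abs_of_neg (not_le.mp hω)]
  have hcov_s : cov[s, g; μ] = 2 * cov[A.indicator 1, g; μ] := by
    have hA_int : Integrable (A.indicator (1 : Ω → ℝ)) μ :=
      (integrable_const (1 : ℝ)).indicator (hm _ hA)
    rw [covariance_sub_const_left (hA_int.const_mul 2), covariance_const_mul_left]
  refine ⟨A, hA, ?_⟩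
  calc |cov[f, g; μ]| = |∫ ω, f ω * h ω ∂μ| := by
        rw [covariance_eq_integral_mul_condExp_sub hm hf hfN hg]
    _ ≤ ∫ ω, N * |h ω| ∂μ := by
        refine abs_integral_le_integral_abs.trans
          (integral_mono_of_nonneg (.of_forall fun _ => abs_nonneg _)
            (hh_int.abs.const_mul N) (.of_forall fun ω => ?_))
        show |f ω * h ω| ≤ N * |h ω|
        rw [abs_mul]
        exact mul_le_mul_of_nonneg_right (hfN ω) (abs_nonneg _)
    _ = N * cov[s, g; μ] := by
        simp_rw [integral_const_mul, ← hsh]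
        rw [covariance_eq_integral_mul_condExp_sub hm hs_meas hs_abs hg]
    _ ≤ 2 * N * |cov[A.indicator 1, g; μ]| := by
        rw [hcov_s, ← mul_assoc, mul_comm N]
        exact mul_le_mul_of_nonneg_left (le_abs_self _) (by positivity)

theorem abs_covariance_le_of_alphaMixing {𝓐 𝓑 : MeasurableSpace Ω} (h𝓐 : 𝓐 ≤ m) (h𝓑 : 𝓑 ≤ m)
    {α : ℝ} (hα : ∀ A B : Set Ω, MeasurableSet[𝓐] A → MeasurableSet[𝓑] B →
      |(μ (A ∩ B)).toReal - (μ A).toReal * (μ B).toReal| ≤ α)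
    {f g : Ω → ℝ} {M N : ℝ} (hf : Measurable[𝓐] f) (hg : Measurable[𝓑] g)
    (hfM : ∀ ω, |f ω| ≤ M) (hgN : ∀ ω, |g ω| ≤ N) :
    |cov[f, g; μ]| ≤ 4 * M * N * α := by
  have : Nonempty Ω := nonempty_of_isProbabilityMeasure μ
  have hM : 0 ≤ M := (abs_nonneg _).trans (hfM (Classical.arbitrary Ω))
  have hN : 0 ≤ N := (abs_nonneg _).trans (hgN (Classical.arbitrary Ω))
  have hg_int : Integrable g μ :=
    .of_bound (hg.mono h𝓑 le_rfl).aestronglyMeasurable N (.of_forall hgN)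
  obtain ⟨A, hA, hfg⟩ := exists_abs_covariance_le_indicator h𝓐 hf.stronglyMeasurable hfM hg_int
  obtain ⟨B, hB, hgA⟩ := exists_abs_covariance_le_indicator h𝓑 hg.stronglyMeasurable hgN
    ((integrable_const (μ := μ) (1 : ℝ)).indicator (h𝓐 _ hA))
  have hAB : |cov[B.indicator 1, A.indicator 1; μ]| ≤ α := by
    rw [covariance_comm, covariance_indicator_one (h𝓐 _ hA) (h𝓑 _ hB)]
    exact hα A B hA hB
  calc |cov[f, g; μ]| ≤ 2 * M * |cov[g, A.indicator 1; μ]| := by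
        rwa [covariance_comm g]
    _ ≤ 2 * M * (2 * N * α) := by
        gcongr
        exact hgA.trans (mul_le_mul_of_nonneg_left hAB (by positivity))
    _ = 4 * M * N * α := by ring

end Mixing

end ProbabilityTheory

/-- Truncated covariance bound under alpha-mixing: if `E|η|^(2+δ) ≤ C₁`,
`E|τ|^(2+δ) ≤ C₂` and `α` bounds the mixing coefficient between `𝓐` and `𝓑`, then
for every `N > 0`,
`|E[ητ] − E[η]E[τ]| ≤ 4N²α + (2/N^δ)(C₁+C₂) + (2/N^δ)√(C₁C₂)`. -/
theorem stmt4
    {Ω : Type*} {m : MeasurableSpace Ω} (μ : Measure Ω) [IsProbabilityMeasure μ]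
    (𝓐 𝓑 : MeasurableSpace Ω) (h𝓐 : 𝓐 ≤ m) (h𝓑 : 𝓑 ≤ m)
    (η τ : Ω → ℝ)
    (hη : Measurable[𝓐] η) (hτ : Measurable[𝓑] τ)
    (δ : ℝ) (hδ : 0 < δ) (C₁ C₂ : ℝ)
    (hC₁ : ∫ ω, |η ω| ^ (2 + δ) ∂μ ≤ C₁)
    (hC₂ : ∫ ω, |τ ω| ^ (2 + δ) ∂μ ≤ C₂)
    (hint₁ : Integrable (fun ω => |η ω| ^ (2 + δ)) μ)
    (hint₂ : Integrable (fun ω => |τ ω| ^ (2 + δ)) μ)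
    (α : ℝ)
    (hα : ∀ A B : Set Ω, MeasurableSet[𝓐] A → MeasurableSet[𝓑] B →
      |(μ (A ∩ B)).toReal - (μ A).toReal * (μ B).toReal| ≤ α) :
    ∀ N : ℝ, 0 < N →
      |(∫ ω, η ω * τ ω ∂μ) - (∫ ω, η ω ∂μ) * (∫ ω, τ ω ∂μ)| ≤
        4 * N ^ 2 * α + (2 / N ^ δ) * (C₁ + C₂) + (2 / N ^ δ) * Real.sqrt (C₁ * C₂) := by
  intro N hN
  have hηm := (hη.mono h𝓐 le_rfl).aestronglyMeasurable (μ := μ)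
  have hτm := (hτ.mono h𝓑 le_rfl).aestronglyMeasurable (μ := μ)
  have hξN : ∀ ω, |truncation η N ω| ≤ N := fun ω =>
    (abs_truncation_le_bound η N ω).trans_eq (abs_of_pos hN)
  have hζN : ∀ ω, |truncation τ N ω| ≤ N := fun ω =>
    (abs_truncation_le_bound τ N ω).trans_eq (abs_of_pos hN)
  have h₁ := abs_covariance_le_of_alphaMixing (μ := μ) h𝓐 h𝓑 hα
    (hη.truncation N) (hτ.truncation N) hξN hζN
  have h₂ := abs_covariance_sub_truncation_le hN hδ.le hηm.truncation hξN hτm hint₂ hC₂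
  have h₃ := abs_covariance_sub_truncation_le hN hδ.le hτm.truncation hζN hηm hint₁ hC₁
  rw [covariance_comm] at h₃
  have h₄ := abs_covariance_sub_truncation_sub_truncation_le hN hδ.le hηm hint₁ hC₁ hτm hint₂ hC₂
  have hη2 := memLp_two_of_integrable_abs_rpow hδ.le hηm hint₁
  have hτ2 := memLp_two_of_integrable_abs_rpow hδ.le hτm hint₂
  calc _ = |cov[η, τ; μ]| := by rw [covariance_eq_sub hη2 hτ2]; rfl
    _ ≤ 4 * N * N * α + 2 * C₂ / N ^ δ + 2 * C₁ / N ^ δ + 2 * (√(C₁ * C₂) / N ^ δ) := by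
        have hsqrt : 0 ≤ √(C₁ * C₂) / N ^ δ := by positivity
        rw [covariance_eq_truncation_add hη2 hτ2 N, abs_le]
        rw [abs_le] at h₁ h₂ h₃ h₄
        constructor <;> linarith [h₁.1, h₁.2, h₂.1, h₂.2, h₃.1, h₃.2, h₄.1, h₄.2]
    _ = 4 * N ^ 2 * α + (2 / N ^ δ) * (C₁ + C₂) + (2 / N ^ δ) * Real.sqrt (C₁ * C₂) := by ring
end

section
/- Let θ₀ ∈ (0,1), and let ρₙ be the Beta(nθ₀, n(1−θ₀)) distribution and π the uniform distribution on (0,1). Then there exists C > 0 such that KL(ρₙ, π) < C + (1/2)·log n for all n large enough. -/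
open MeasureTheory

/-- The density of the Beta distribution with parameters `a`, `b` on `(0,1)`. -/
noncomputable def betaPDF (a b θ : ℝ) : ℝ :=
  θ ^ (a - 1) * (1 - θ) ^ (b - 1) * (Real.Gamma (a + b) / (Real.Gamma a * Real.Gamma b))

/-! Since `∫ ρ log ρ ≤ log (sup ρ)` for a probability density `ρ`, it suffices to bound the
density of `Beta(a, b)`, `a = nθ₀`, `b = n(1-θ₀)`, by `c √n`. Its unnormalised form is
`exp ((a-1) log θ + (b-1) log (1-θ))`; by Gibbs' inequality the maximum sits at the mode `m`, and
since `KL ≤ χ²` the density stays above `exp (-1)` times that maximum on `[m, m + δ]` for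
`δ ≍ 1/√(a+b)`. Total mass one then bounds the maximum by `e/δ`. -/

open Real Set Filter Topology

lemma betaPDF_eq_betaPDFReal {a b θ : ℝ} (hθ : θ ∈ Ioo (0 : ℝ) 1) :
    betaPDF a b θ = ProbabilityTheory.betaPDFReal a b θ := by
  rw [ProbabilityTheory.betaPDFReal, if_pos (mem_Ioo.1 hθ), betaPDF, ProbabilityTheory.beta,
    one_div_div]
  ring

lemma integral_betaPDFReal {a b : ℝ} (ha : 0 < a) (hb : 0 < b) :
    ∫ x, ProbabilityTheory.betaPDFReal a b x = 1 := by
  have hnonneg : ∀ x, 0 ≤ ProbabilityTheory.betaPDFReal a b x := fun x => by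
    by_cases hx : 0 < x ∧ x < 1
    · exact (ProbabilityTheory.betaPDFReal_pos hx.1 hx.2 ha hb).le
    · rw [ProbabilityTheory.betaPDFReal, if_neg hx]
  rw [integral_eq_lintegral_of_nonneg_ae (Eventually.of_forall hnonneg)
    (by fun_prop : Measurable _).aestronglyMeasurable]
  exact ENNReal.toReal_eq_one_iff _ |>.2 (ProbabilityTheory.lintegral_betaPDF_eq_one ha hb)

lemma setIntegral_betaPDF {a b : ℝ} (ha : 0 < a) (hb : 0 < b) :
    ∫ θ in Ioo (0 : ℝ) 1, betaPDF a b θ = 1 := by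
  rw [setIntegral_congr_fun measurableSet_Ioo fun θ hθ => betaPDF_eq_betaPDFReal hθ,
    setIntegral_eq_integral_of_forall_compl_eq_zero fun x hx => by
      rw [ProbabilityTheory.betaPDFReal, if_neg (mt mem_Ioo.2 hx)], integral_betaPDFReal ha hb]

lemma integrableOn_betaPDF {a b : ℝ} (ha : 0 < a) (hb : 0 < b) :
    IntegrableOn (betaPDF a b) (Ioo 0 1) :=
  Integrable.of_integral_ne_zero (by rw [setIntegral_betaPDF ha hb]; exact one_ne_zero)

lemma betaPDF_pos {a b θ : ℝ} (ha : 0 < a) (hb : 0 < b) (hθ : θ ∈ Ioo (0 : ℝ) 1) :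
    0 < betaPDF a b θ :=
  betaPDF_eq_betaPDFReal hθ ▸ ProbabilityTheory.betaPDFReal_pos hθ.1 hθ.2 ha hb

section Density

variable {α : Type*} [MeasurableSpace α] {μ : Measure α} {ρ : α → ℝ} {s t : Set α}

lemma measureReal_mul_le_one_of_le_on (hs : MeasurableSet s) (hint : IntegrableOn ρ s μ)
    (hnonneg : ∀ x ∈ s, 0 ≤ ρ x) (hnorm : ∫ x in s, ρ x ∂μ = 1) (hts : t ⊆ s)
    (ht : MeasurableSet t) (htμ : μ t ≠ ⊤)
    {L : ℝ} (hL : ∀ x ∈ t, L ≤ ρ x) :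
    μ.real t * L ≤ 1 :=
  calc μ.real t * L = ∫ _ in t, L ∂μ := by rw [setIntegral_const, smul_eq_mul]
    _ ≤ ∫ x in t, ρ x ∂μ :=
      setIntegral_mono_on (integrableOn_const htμ) (hint.mono_set hts) ht hL
    _ ≤ ∫ x in s, ρ x ∂μ :=
      setIntegral_mono_set hint (ae_restrict_of_forall_mem hs hnonneg) hts.eventuallyLE
    _ = 1 := hnorm

lemma setIntegral_log_mul_le_log_of_le (hs : MeasurableSet s) (hint : IntegrableOn ρ s μ)
    (hpos : ∀ x ∈ s, 0 < ρ x) (hnorm : ∫ x in s, ρ x ∂μ = 1) {K : ℝ} (hK : 1 ≤ K)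
    (hρK : ∀ x ∈ s, ρ x ≤ K) :
    ∫ x in s, log (ρ x) * ρ x ∂μ ≤ log K := by
  by_cases hlog : IntegrableOn (fun x => log (ρ x) * ρ x) s μ
  · calc ∫ x in s, log (ρ x) * ρ x ∂μ ≤ ∫ x in s, log K * ρ x ∂μ :=
          setIntegral_mono_on hlog (hint.const_mul _) hs fun x hx =>
            mul_le_mul_of_nonneg_right (log_le_log (hpos x hx) (hρK x hx)) (hpos x hx).le
      _ = log K := by rw [integral_const_mul, hnorm, mul_one]
  · rw [integral_undef hlog]
    exact log_nonneg hK

end Density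

lemma mul_log_add_mul_log_sub_le {p q x y u v : ℝ} (hp : 0 ≤ p) (hq : 0 ≤ q) (hx : 0 < x)
    (hy : 0 < y) (hu : 0 < u) (hv : 0 < v) :
    p * log x + q * log y - (p * log u + q * log v) ≤ p * (x / u - 1) + q * (y / v - 1) := by
  have hxu := log_le_sub_one_of_pos (div_pos hx hu)
  have hyv := log_le_sub_one_of_pos (div_pos hy hv)
  rw [log_div hx.ne' hu.ne'] at hxu
  rw [log_div hy.ne' hv.ne'] at hyv
  nlinarith [mul_le_mul_of_nonneg_left hxu hp, mul_le_mul_of_nonneg_left hyv hq]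

lemma rpow_mul_rpow_eq_exp {x y : ℝ} (hx : 0 < x) (hy : 0 < y) (p q : ℝ) :
    x ^ p * y ^ q = exp (p * log x + q * log y) := by
  rw [rpow_def_of_pos hx, rpow_def_of_pos hy, ← exp_add]
  ring_nf

noncomputable def betaMode (a b : ℝ) : ℝ := (a - 1) / (a + b - 2)

section Mode

variable {a b θ : ℝ}

lemma betaMode_pos (ha : 1 < a) (hb : 1 < b) : 0 < betaMode a b :=
  div_pos (by linarith) (by linarith)

lemma one_sub_betaMode (ha : 1 < a) (hb : 1 < b) :
    1 - betaMode a b = (b - 1) / (a + b - 2) := by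
  rw [betaMode]
  field_simp [show a + b - 2 ≠ 0 by linarith]
  ring

lemma betaMode_lt_one (ha : 1 < a) (hb : 1 < b) : betaMode a b < 1 := by
  have h := one_sub_betaMode ha hb
  have hpos : 0 < (b - 1) / (a + b - 2) := div_pos (by linarith) (by linarith)
  linarith

lemma mul_log_add_mul_log_one_sub_le_betaMode (ha : 1 < a) (hb : 1 < b)
    (hθ : θ ∈ Ioo (0 : ℝ) 1) :
    (a - 1) * log θ + (b - 1) * log (1 - θ)
      ≤ (a - 1) * log (betaMode a b) + (b - 1) * log (1 - betaMode a b) := by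
  have key := mul_log_add_mul_log_sub_le (by linarith : 0 ≤ a - 1) (by linarith : 0 ≤ b - 1)
    hθ.1 (sub_pos.2 hθ.2) (betaMode_pos ha hb) (sub_pos.2 (betaMode_lt_one ha hb))
  have hzero : (a - 1) * (θ / betaMode a b - 1) + (b - 1) * ((1 - θ) / (1 - betaMode a b) - 1)
      = 0 := by
    rw [one_sub_betaMode ha hb, betaMode]
    field_simp [show a - 1 ≠ 0 by linarith, show b - 1 ≠ 0 by linarith]
    ring
  linarith

lemma betaMode_mul_log_add_mul_log_one_sub_sub_le (ha : 1 < a) (hb : 1 < b)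
    (hθ : θ ∈ Ioo (0 : ℝ) 1) :
    (a - 1) * log (betaMode a b) + (b - 1) * log (1 - betaMode a b)
        - ((a - 1) * log θ + (b - 1) * log (1 - θ))
      ≤ (a + b - 2) * (θ - betaMode a b) ^ 2 / (θ * (1 - θ)) := by
  have h1θ : 0 < 1 - θ := sub_pos.2 hθ.2
  have key := mul_log_add_mul_log_sub_le (by linarith : 0 ≤ a - 1) (by linarith : 0 ≤ b - 1)
    (betaMode_pos ha hb) (sub_pos.2 (betaMode_lt_one ha hb)) hθ.1 h1θ
  have hchi : (a - 1) * (betaMode a b / θ - 1) + (b - 1) * ((1 - betaMode a b) / (1 - θ) - 1)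
      = (a + b - 2) * (θ - betaMode a b) ^ 2 / (θ * (1 - θ)) := by
    rw [one_sub_betaMode ha hb, betaMode]
    field_simp [hθ.1.ne', h1θ.ne', show a + b - 2 ≠ 0 by linarith]
    ring
  linarith

lemma rpow_mul_one_sub_rpow_le_betaMode (ha : 1 < a) (hb : 1 < b) (hθ : θ ∈ Ioo (0 : ℝ) 1) :
    θ ^ (a - 1) * (1 - θ) ^ (b - 1)
      ≤ betaMode a b ^ (a - 1) * (1 - betaMode a b) ^ (b - 1) := by
  rw [rpow_mul_rpow_eq_exp hθ.1 (sub_pos.2 hθ.2),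
    rpow_mul_rpow_eq_exp (betaMode_pos ha hb) (sub_pos.2 (betaMode_lt_one ha hb))]
  exact exp_le_exp.2 (mul_log_add_mul_log_one_sub_le_betaMode ha hb hθ)

lemma exp_neg_one_mul_betaMode_le_rpow (ha : 1 < a) (hb : 1 < b) (hθ : θ ∈ Ioo (0 : ℝ) 1)
    (hconc : (a + b - 2) * (θ - betaMode a b) ^ 2 ≤ θ * (1 - θ)) :
    exp (-1) * (betaMode a b ^ (a - 1) * (1 - betaMode a b) ^ (b - 1))
      ≤ θ ^ (a - 1) * (1 - θ) ^ (b - 1) := by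
  rw [rpow_mul_rpow_eq_exp hθ.1 (sub_pos.2 hθ.2),
    rpow_mul_rpow_eq_exp (betaMode_pos ha hb) (sub_pos.2 (betaMode_lt_one ha hb)), ← exp_add,
    exp_le_exp]
  have hchi := betaMode_mul_log_add_mul_log_one_sub_sub_le ha hb hθ
  have hle : (a + b - 2) * (θ - betaMode a b) ^ 2 / (θ * (1 - θ)) ≤ 1 :=
    div_le_one_of_le₀ hconc (mul_pos hθ.1 (sub_pos.2 hθ.2)).le
  linarith

end Mode

lemma betaPDF_le_exp_one_div {a b δ : ℝ} (ha : 1 < a) (hb : 1 < b) (hδ : 0 < δ)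
    (hδ1 : betaMode a b + δ < 1)
    (hconc : ∀ θ ∈ Icc (betaMode a b) (betaMode a b + δ),
      (a + b - 2) * (θ - betaMode a b) ^ 2 ≤ θ * (1 - θ))
    {θ : ℝ} (hθ : θ ∈ Ioo (0 : ℝ) 1) :
    betaPDF a b θ ≤ exp 1 / δ := by
  have ha0 : 0 < a := by linarith
  have hb0 : 0 < b := by linarith
  have hZ : 0 ≤ Gamma (a + b) / (Gamma a * Gamma b) :=
    (div_pos (Gamma_pos_of_pos (add_pos ha0 hb0))
      (mul_pos (Gamma_pos_of_pos ha0) (Gamma_pos_of_pos hb0))).le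
  set M := betaMode a b ^ (a - 1) * (1 - betaMode a b) ^ (b - 1) *
    (Gamma (a + b) / (Gamma a * Gamma b))
  have hsub : Icc (betaMode a b) (betaMode a b + δ) ⊆ Ioo 0 1 := fun x hx =>
    ⟨(betaMode_pos ha hb).trans_le hx.1, hx.2.trans_lt hδ1⟩
  have hmass : δ * (exp (-1) * M) ≤ 1 := by
    have := measureReal_mul_le_one_of_le_on measurableSet_Ioo (integrableOn_betaPDF ha0 hb0)
      (fun x hx => (betaPDF_pos ha0 hb0 hx).le) (setIntegral_betaPDF ha0 hb0) hsub
      measurableSet_Icc measure_Icc_lt_top.ne (L := exp (-1) * M) fun x hx => by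
        rw [← mul_assoc]
        exact mul_le_mul_of_nonneg_right
          (exp_neg_one_mul_betaMode_le_rpow ha hb (hsub hx) (hconc x hx)) hZ
    rwa [volume_real_Icc_of_le (by linarith), add_sub_cancel_left] at this
  calc betaPDF a b θ ≤ M :=
        mul_le_mul_of_nonneg_right (rpow_mul_one_sub_rpow_le_betaMode ha hb hθ) hZ
    _ = exp 1 * (exp (-1) * M) := by rw [← mul_assoc, ← exp_add]; norm_num
    _ ≤ exp 1 / δ := by
      rw [le_div_iff₀ hδ]
      nlinarith [exp_pos 1]

lemma tendsto_betaMode_natCast_mul (θ₀ : ℝ) :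
    Tendsto (fun n : ℕ => betaMode (n * θ₀) (n * (1 - θ₀))) atTop (𝓝 θ₀) := by
  have hden : Tendsto (fun n : ℕ => (n : ℝ) - 2) atTop atTop :=
    tendsto_atTop_add_const_right _ _ tendsto_natCast_atTop_atTop
  have hlim := ((tendsto_const_nhds (x := 2 * θ₀ - 1)).div_atTop hden).const_add θ₀
  rw [add_zero] at hlim
  refine hlim.congr' ?_
  filter_upwards [eventually_gt_atTop 2] with n hn
  have hn2 : (n : ℝ) - 2 ≠ 0 := sub_ne_zero.2 (by exact_mod_cast hn.ne')
  rw [betaMode, show (n : ℝ) * θ₀ + n * (1 - θ₀) - 2 = n - 2 by ring]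
  field_simp
  ring

lemma exists_eventually_betaPDF_le_mul_sqrt {θ₀ : ℝ} (hθ₀ : θ₀ ∈ Ioo (0 : ℝ) 1) :
    ∃ c ≥ 1, ∀ᶠ n : ℕ in atTop, ∀ θ ∈ Ioo (0 : ℝ) 1,
      betaPDF (n * θ₀) (n * (1 - θ₀)) θ ≤ c * √n := by
  obtain ⟨h0, h1⟩ := hθ₀
  set ε := min θ₀ (1 - θ₀) / 2 with hε_def
  have hmin : 0 < min θ₀ (1 - θ₀) := lt_min h0 (sub_pos.2 h1)
  have hε : 0 < ε := half_pos hmin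
  have hεθ : ε < θ₀ := by linarith [min_le_left θ₀ (1 - θ₀)]
  have hθε : θ₀ + 0 < 1 - ε := by linarith [min_le_right θ₀ (1 - θ₀)]
  have hδ : Tendsto (fun n : ℕ => ε / √n) atTop (𝓝 0) :=
    tendsto_const_nhds.div_atTop (tendsto_sqrt_atTop.comp tendsto_natCast_atTop_atTop)
  have hmode := tendsto_betaMode_natCast_mul θ₀
  refine ⟨exp 1 / ε, (one_le_div hε).2 (by linarith [add_one_le_exp 1]), ?_⟩
  filter_upwards [eventually_ge_atTop 1,
    (tendsto_natCast_atTop_atTop.atTop_mul_const h0).eventually_gt_atTop 1,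
    (tendsto_natCast_atTop_atTop.atTop_mul_const (sub_pos.2 h1)).eventually_gt_atTop 1,
    hmode.eventually (eventually_gt_nhds hεθ),
    (hmode.add hδ).eventually (eventually_lt_nhds hθε)] with n hn ha hb hm hmδ θ hθ
  have hn0 : (0 : ℝ) < n := by exact_mod_cast hn
  have hδpos : 0 < ε / √n := div_pos hε (sqrt_pos.2 hn0)
  have hconc : ∀ x ∈ Icc (betaMode (n * θ₀) (n * (1 - θ₀)))
      (betaMode (n * θ₀) (n * (1 - θ₀)) + ε / √n), (n * θ₀ + n * (1 - θ₀) - 2) *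
        (x - betaMode (n * θ₀) (n * (1 - θ₀))) ^ 2 ≤ x * (1 - x) := fun x hx => by
    have hsq : (x - betaMode (n * θ₀) (n * (1 - θ₀))) ^ 2 ≤ ε ^ 2 / n := by
      have := pow_le_pow_left₀ (sub_nonneg.2 hx.1) (sub_le_iff_le_add'.2 hx.2) 2
      rwa [div_pow, sq_sqrt hn0.le] at this
    calc (n * θ₀ + n * (1 - θ₀) - 2) * (x - betaMode (n * θ₀) (n * (1 - θ₀))) ^ 2
        ≤ n * (ε ^ 2 / n) := mul_le_mul (by linarith) hsq (sq_nonneg _) hn0.le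
      _ = ε * ε := by field_simp
      _ ≤ x * (1 - x) := mul_le_mul (by linarith [hx.1]) (by linarith [hx.2]) hε.le
          (by linarith [hx.1])
  calc betaPDF (n * θ₀) (n * (1 - θ₀)) θ ≤ exp 1 / (ε / √n) :=
        betaPDF_le_exp_one_div ha hb hδpos (by linarith) hconc hθ
    _ = exp 1 / ε * √n := by field_simp

/-- For `θ₀ ∈ (0,1)`, `ρₙ = Beta(nθ₀, n(1−θ₀))` and `π` the uniform distribution on
`(0,1)`, there is `C > 0` with `KL(ρₙ, π) < C + (1/2) log n` for all large `n`.
For a uniform prior, `KL(ρₙ,π) = ∫₀¹ log(ρₙ(θ)) ρₙ(θ) dθ`. -/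
theorem stmt13 (θ₀ : ℝ) (hθ₀ : θ₀ ∈ Set.Ioo (0 : ℝ) 1) :
    ∃ C > (0 : ℝ), ∃ N : ℕ, ∀ n : ℕ, N ≤ n →
      ∫ θ in Set.Ioo (0 : ℝ) 1,
          Real.log (betaPDF (n * θ₀) (n * (1 - θ₀)) θ) *
            betaPDF (n * θ₀) (n * (1 - θ₀)) θ
        < C + (1 / 2) * Real.log n := by
  obtain ⟨c, hc, hbound⟩ := exists_eventually_betaPDF_le_mul_sqrt hθ₀
  obtain ⟨N, hN⟩ := eventually_atTop.1 ((eventually_ge_atTop 1).and hbound)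
  refine ⟨log c + 1, by linarith [log_nonneg hc], N, fun n hn => ?_⟩
  obtain ⟨hn1, hρ⟩ := hN n hn
  have hn0 : (0 : ℝ) < n := by exact_mod_cast hn1
  have ha : 0 < n * θ₀ := mul_pos hn0 hθ₀.1
  have hb : 0 < n * (1 - θ₀) := mul_pos hn0 (sub_pos.2 hθ₀.2)
  have hK : 1 ≤ c * √n :=
    one_le_mul_of_one_le_of_one_le hc (one_le_sqrt.2 (by exact_mod_cast hn1))
  calc ∫ θ in Ioo (0 : ℝ) 1, log (betaPDF (n * θ₀) (n * (1 - θ₀)) θ) *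
          betaPDF (n * θ₀) (n * (1 - θ₀)) θ
      ≤ log (c * √n) :=
        setIntegral_log_mul_le_log_of_le measurableSet_Ioo (integrableOn_betaPDF ha hb)
          (fun θ hθ => betaPDF_pos ha hb hθ) (setIntegral_betaPDF ha hb) hK hρ
    _ = log c + 1 / 2 * log n := by
        rw [log_mul (by positivity) (sqrt_pos.2 hn0).ne', log_sqrt hn0.le]
        ring
    _ < log c + 1 + 1 / 2 * log n := by linarith
end
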